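/- arXiv:1310.1153 — 2 statements merged into one kernel-verified Lean document; each statement's English description precedes it below -/
import Mathlib

section
/- For all γ_a, γ_b > 0, the compute-and-forward sum rate satisfies [½ log₂(γ_a/(γ_a+γ_b) + γ_a)]⁺ + [½ log₂(γ_b/(γ_a+γ_b) + γ_b)]⁺ ≤ C(γ_a + γ_b), where [x]⁺ = max(x,0). -/
noncomputable def gaussC (γ : ℝ) : ℝ := Real.logb 2 (1 + γ)

/-! Writing `s = γa + γb`, the two rate arguments are `(γa / s) (1 + s)` and `(γb / s) (1 + s)`.
Both fractions lie in `[0, 1]`, so each argument is at most `1 + s`: each positive part is at most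
`½ logb (1 + s)`, and the two together at most `logb (1 + s) = C(s)`. -/

open Real

lemma half_pos_part_add_le {a b L : ℝ} (ha : a ≤ L) (hb : b ≤ L) (hL : 0 ≤ L) :
    max (1 / 2 * a) 0 + max (1 / 2 * b) 0 ≤ L := by
  rcases le_total (1 / 2 * a) 0 with h₁ | h₁ <;> rcases le_total (1 / 2 * b) 0 with h₂ | h₂ <;>
    simp only [max_eq_left, max_eq_right, h₁, h₂] <;> linarith

lemma half_logb_pos_part_add_le {β x y c : ℝ} (hβ : 1 < β) (hx : 0 < x) (hy : 0 < y)
    (hxc : x ≤ c) (hyc : y ≤ c) (hc : 1 ≤ c) :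
    max (1 / 2 * logb β x) 0 + max (1 / 2 * logb β y) 0 ≤ logb β c :=
  half_pos_part_add_le (logb_le_logb_of_le hβ hx hxc) (logb_le_logb_of_le hβ hy hyc)
    (logb_nonneg hβ hc)

lemma div_add_self_eq_div_mul_one_add {γ s : ℝ} (hs : s ≠ 0) : γ / s + γ = γ / s * (1 + s) := by
  rw [mul_one_add, div_mul_cancel₀ _ hs]

theorem cf_sum_rate_le_mac (γa γb : ℝ) (ha : 0 < γa) (hb : 0 < γb) :
    max ((1 / 2) * Real.logb 2 (γa / (γa + γb) + γa)) 0 +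
      max ((1 / 2) * Real.logb 2 (γb / (γa + γb) + γb)) 0 ≤ gaussC (γa + γb) := by
  set s := γa + γb
  have hs : 0 < s := by positivity
  have hfa : γa / s ≤ 1 := (div_le_one hs).2 (by linarith)
  have hfb : γb / s ≤ 1 := (div_le_one hs).2 (by linarith)
  rw [div_add_self_eq_div_mul_one_add hs.ne', div_add_self_eq_div_mul_one_add hs.ne']
  exact half_logb_pos_part_add_le one_lt_two (by positivity) (by positivity)
    (mul_le_of_le_one_left (by positivity) hfa) (mul_le_of_le_one_left (by positivity) hfb)
    (by linarith)
end

section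
/- Every rate pair achievable by the CF-BC protocol is also achievable by the CF-CMAC protocol: if (R_a, R_b) satisfies the CF-BC constraints with time fractions (μ₉, μ₁₀, μ₁₁, μ₁₂) summing to at most 1, then it satisfies the CF-CMAC constraints with time fractions (μ₉, μ₁₀, μ₁₃ = μ₁₁ + μ₁₂). -/
lemma gaussC_nonneg {γ : ℝ} (hγ : 0 ≤ γ) : 0 ≤ gaussC γ :=
  Real.logb_nonneg one_lt_two (by linarith)

lemma gaussC_le_gaussC {γ δ : ℝ} (hγ : -1 < γ) (h : γ ≤ δ) : gaussC γ ≤ gaussC δ := by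
  unfold gaussC
  gcongr <;> linarith

section OrderedSemiring

variable {α : Type*} [Semiring α] [PartialOrder α] [IsOrderedRing α]

lemma le_add_mul_of_le_mul {x a b c : α} (h : x ≤ a * c) (hb : 0 ≤ b) (hc : 0 ≤ c) :
    x ≤ (a + b) * c :=
  h.trans (mul_le_mul_of_nonneg_right (le_add_of_nonneg_right hb) hc)

lemma le_add_mul_of_le_mul' {x a b c : α} (h : x ≤ b * c) (ha : 0 ≤ a) (hc : 0 ≤ c) :
    x ≤ (a + b) * c :=
  h.trans (mul_le_mul_of_nonneg_right (le_add_of_nonneg_left ha) hc)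

lemma add_le_add_mul_of_le_mul {x y a b c d e : α} (hx : x ≤ a * c) (hy : y ≤ b * d)
    (ha : 0 ≤ a) (hb : 0 ≤ b) (hce : c ≤ e) (hde : d ≤ e) : x + y ≤ (a + b) * e :=
  calc x + y ≤ a * c + b * d := add_le_add hx hy
    _ ≤ a * e + b * e := add_le_add (mul_le_mul_of_nonneg_left hce ha)
        (mul_le_mul_of_nonneg_left hde hb)
    _ = (a + b) * e := (add_mul a b e).symm

end OrderedSemiring

theorem cfbc_subset_cfcmac_general (γa1 γb1 γa2 γb2 : ℝ)
    (ha1 : 0 ≤ γa1) (hb1 : 0 ≤ γb1) (ha2 : 0 ≤ γa2) (hb2 : 0 ≤ γb2)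
    (ra1 rb1 ra2 rb2 : ℝ)
    (F₁ F₂ F₃ F₄ μ₉ μ₁₀ μ₁₁ μ₁₂ : ℝ)
    (hμ₁₁ : 0 ≤ μ₁₁) (hμ₁₂ : 0 ≤ μ₁₂)
    (hsum : μ₉ + μ₁₀ + μ₁₁ + μ₁₂ ≤ 1)
    (h1 : F₁ ≤ μ₉ * ra1) (h2 : F₂ ≤ μ₉ * rb1)
    (h3 : F₃ ≤ μ₁₀ * ra2) (h4 : F₄ ≤ μ₁₀ * rb2)
    (h5 : F₂ ≤ μ₁₁ * gaussC γa1) (h6 : F₁ ≤ μ₁₁ * gaussC γb1)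
    (h7 : F₄ ≤ μ₁₂ * gaussC γa2) (h8 : F₃ ≤ μ₁₂ * gaussC γb2) :
    ∃ μ₁₃ : ℝ, μ₁₃ = μ₁₁ + μ₁₂ ∧ μ₉ + μ₁₀ + μ₁₃ ≤ 1 ∧
      F₁ ≤ μ₉ * ra1 ∧ F₂ ≤ μ₉ * rb1 ∧ F₃ ≤ μ₁₀ * ra2 ∧ F₄ ≤ μ₁₀ * rb2 ∧
      F₂ ≤ μ₁₃ * gaussC γa1 ∧ F₁ ≤ μ₁₃ * gaussC γb1 ∧
      F₄ ≤ μ₁₃ * gaussC γa2 ∧ F₃ ≤ μ₁₃ * gaussC γb2 ∧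
      F₂ + F₄ ≤ μ₁₃ * gaussC (γa1 + γa2) ∧
      F₁ + F₃ ≤ μ₁₃ * gaussC (γb1 + γb2) := by
  have le_sum_left {γ δ : ℝ} (hγ : 0 ≤ γ) (hδ : 0 ≤ δ) : gaussC γ ≤ gaussC (γ + δ) :=
    gaussC_le_gaussC (by linarith) (le_add_of_nonneg_right hδ)
  have le_sum_right {γ δ : ℝ} (hγ : 0 ≤ γ) (hδ : 0 ≤ δ) : gaussC δ ≤ gaussC (γ + δ) :=
    gaussC_le_gaussC (by linarith) (le_add_of_nonneg_left hγ)
  refine ⟨μ₁₁ + μ₁₂, rfl, by linarith, h1, h2, h3, h4,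
    le_add_mul_of_le_mul h5 hμ₁₂ (gaussC_nonneg ha1),
    le_add_mul_of_le_mul h6 hμ₁₂ (gaussC_nonneg hb1),
    le_add_mul_of_le_mul' h7 hμ₁₁ (gaussC_nonneg ha2),
    le_add_mul_of_le_mul' h8 hμ₁₁ (gaussC_nonneg hb2), ?_, ?_⟩
  · exact add_le_add_mul_of_le_mul h5 h7 hμ₁₁ hμ₁₂ (le_sum_left ha1 ha2) (le_sum_right ha1 ha2)
  · exact add_le_add_mul_of_le_mul h6 h8 hμ₁₁ hμ₁₂ (le_sum_left hb1 hb2) (le_sum_right hb1 hb2)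

theorem cfbc_subset_cfcmac (γa1 γb1 γa2 γb2 : ℝ)
    (ha1 : 0 ≤ γa1) (hb1 : 0 ≤ γb1) (ha2 : 0 ≤ γa2) (hb2 : 0 ≤ γb2)
    (ra1 rb1 ra2 rb2 : ℝ)
    (F₁ F₂ F₃ F₄ μ₉ μ₁₀ μ₁₁ μ₁₂ Ra Rb : ℝ)
    (hF₁ : 0 ≤ F₁) (hF₂ : 0 ≤ F₂) (hF₃ : 0 ≤ F₃) (hF₄ : 0 ≤ F₄)
    (hμ₉ : 0 ≤ μ₉) (hμ₁₀ : 0 ≤ μ₁₀) (hμ₁₁ : 0 ≤ μ₁₁) (hμ₁₂ : 0 ≤ μ₁₂)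
    (hsum : μ₉ + μ₁₀ + μ₁₁ + μ₁₂ ≤ 1)
    (h1 : F₁ ≤ μ₉ * ra1) (h2 : F₂ ≤ μ₉ * rb1)
    (h3 : F₃ ≤ μ₁₀ * ra2) (h4 : F₄ ≤ μ₁₀ * rb2)
    (h5 : F₂ ≤ μ₁₁ * gaussC γa1) (h6 : F₁ ≤ μ₁₁ * gaussC γb1)
    (h7 : F₄ ≤ μ₁₂ * gaussC γa2) (h8 : F₃ ≤ μ₁₂ * gaussC γb2)
    (hRa : Ra = F₁ + F₃) (hRb : Rb = F₂ + F₄) :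
    ∃ μ₁₃ : ℝ, μ₁₃ = μ₁₁ + μ₁₂ ∧ μ₉ + μ₁₀ + μ₁₃ ≤ 1 ∧
      F₁ ≤ μ₉ * ra1 ∧ F₂ ≤ μ₉ * rb1 ∧ F₃ ≤ μ₁₀ * ra2 ∧ F₄ ≤ μ₁₀ * rb2 ∧
      F₂ ≤ μ₁₃ * gaussC γa1 ∧ F₁ ≤ μ₁₃ * gaussC γb1 ∧
      F₄ ≤ μ₁₃ * gaussC γa2 ∧ F₃ ≤ μ₁₃ * gaussC γb2 ∧
      F₂ + F₄ ≤ μ₁₃ * gaussC (γa1 + γa2) ∧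
      F₁ + F₃ ≤ μ₁₃ * gaussC (γb1 + γb2) :=
  cfbc_subset_cfcmac_general γa1 γb1 γa2 γb2 ha1 hb1 ha2 hb2 ra1 rb1 ra2 rb2 F₁ F₂ F₃ F₄ μ₉ μ₁₀ μ₁₁
    μ₁₂ hμ₁₁ hμ₁₂ hsum h1 h2 h3 h4 h5 h6 h7 h8
end
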